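/- Let i be a nonnegative integer and let G be a group (Δ(G)+i)-edge-critical graph. Then for every edge uv ∈ E(G), the degree sum satisfies d_G(u) + d_G(v) ≥ Δ(G) + i + 2. -/

import Mathlib

open SimpleGraph

/-- `G` is `A`-colorable for the Abelian group `A`: for every "oriented weight" `f` on the
edges (encoded as an antisymmetric function on ordered pairs, which is equivalent to fixing an
orientation `D` of `E(G)` and a function `E(G) → A`), there is an `(A,f)`-coloring, i.e. a
vertex coloring `c : V → A` with `c u - c v ≠ f u v` for every edge oriented from `u` to `v`. -/
def IsGroupColorable {V : Type*} (G : SimpleGraph V) (A : Type) [AddCommGroup A] : Prop :=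
  ∀ f : V → V → A, (∀ u v, f v u = - f u v) →
    ∃ c : V → A, ∀ u v, G.Adj u v → c u - c v ≠ f u v

/-- The group chromatic number `χ_g(G)`: the least `m` such that `G` is `A`-colorable for
every Abelian group `A` of order at least `m`. -/
noncomputable def groupChromaticNumber {V : Type*} (G : SimpleGraph V) : ℕ :=
  sInf {m : ℕ | ∀ (A : Type) [AddCommGroup A] [Fintype A],
    m ≤ Fintype.card A → IsGroupColorable G A}

/-- `G` is group `k`-choosable: for every Abelian group `A` of order at least `k`, every
`k`-uniform list assignment `L`, and every antisymmetric edge weight `f` (i.e. an orientation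
together with a function `E(G) → A`), there is an `(A,L,f)`-coloring. -/
def IsGroupChoosable {V : Type*} (G : SimpleGraph V) (k : ℕ) : Prop :=
  ∀ (A : Type) [AddCommGroup A] [Fintype A], k ≤ Fintype.card A →
    ∀ L : V → Finset A, (∀ v, (L v).card = k) →
      ∀ f : V → V → A, (∀ u v, f v u = - f u v) →
        ∃ c : V → A, (∀ v, c v ∈ L v) ∧ ∀ u v, G.Adj u v → c u - c v ≠ f u v

/-- The group choice number `χ_gl(G)`: the least `k` such that `G` is group `k`-choosable. -/
noncomputable def groupChoiceNumber {V : Type*} (G : SimpleGraph V) : ℕ :=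
  sInf {k : ℕ | IsGroupChoosable G k}

/-- `G` is group `k`-edge-choosable iff its line graph is group `k`-choosable. -/
def IsGroupEdgeChoosable {V : Type*} (G : SimpleGraph V) (k : ℕ) : Prop :=
  IsGroupChoosable G.lineGraph k

/-- The group edge chromatic number `χ'_g(G) = χ_g(𝓛(G))`. -/
noncomputable def groupEdgeChromaticNumber {V : Type*} (G : SimpleGraph V) : ℕ :=
  groupChromaticNumber G.lineGraph

/-- The group edge choice number `χ'_gl(G) = χ_gl(𝓛(G))`. -/
noncomputable def groupEdgeChoiceNumber {V : Type*} (G : SimpleGraph V) : ℕ :=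
  groupChoiceNumber G.lineGraph

/-- `G` is a cycle (of some length `n ≥ 3`). -/
def IsCycleGraph {V : Type*} (G : SimpleGraph V) : Prop :=
  ∃ n : ℕ, 3 ≤ n ∧ Nonempty (G ≃g cycleGraph n)

/-- The maximum degree of a subgraph `H` of `G` (the degree of `v` in `H` is the
cardinality of its neighbor set in `H`). -/
noncomputable def subgraphMaxDegree {V : Type*} {G : SimpleGraph V} (H : G.Subgraph) : ℕ :=
  ⨆ v, (H.neighborSet v).ncard

/-- `G` is group `(Δ(G)+i)`-edge-critical: `χ'_gl(G) > Δ(G) + i`, but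
`χ'_gl(H) ≤ Δ(H) + i` for every proper subgraph `H ⊂ G`. -/
def IsGroupEdgeCritical {V : Type*} [Fintype V] (G : SimpleGraph V) [DecidableRel G.Adj]
    (i : ℕ) : Prop :=
  G.maxDegree + i < groupEdgeChoiceNumber G ∧
    ∀ H : G.Subgraph, H ≠ ⊤ → groupEdgeChoiceNumber H.coe ≤ subgraphMaxDegree H + i

/-!
Delete the edge `uv`. The resulting proper subgraph `H` has `Δ(H) ≤ Δ(G)`, so by criticality
`𝓛(H)`, which contains `𝓛(G) - uv` as an induced subgraph, is group `(Δ(G)+i)`-choosable.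
In `𝓛(G)` the vertex `uv` has degree at most `d(u) + d(v) - 2`; were this below `Δ(G) + i`,
every list coloring of `𝓛(G) - uv` would extend to `uv` (at most that many values are
forbidden there), making `G` group `(Δ(G)+i)`-edge-choosable.
-/

namespace SimpleGraph

variable {V : Type*} {G : SimpleGraph V}

theorem IsGroupChoosable.mono {k k' : ℕ} (h : IsGroupChoosable G k) (hk : k ≤ k') :
    IsGroupChoosable G k' := by
  intro A _ _ hA L hL f hf
  have hsub : ∀ v, ∃ t ⊆ L v, t.card = k := fun v =>
    Finset.exists_subset_card_eq ((hL v).symm ▸ hk)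
  choose L' hL'L hL'card using hsub
  obtain ⟨c, hcL, hc⟩ := h A (hk.trans hA) L' hL'card f hf
  exact ⟨c, fun v => hL'L v (hcL v), hc⟩

theorem IsGroupChoosable.of_embedding {W : Type*} {G' : SimpleGraph W} (φ : G ↪g G') {k : ℕ}
    (h : IsGroupChoosable G' k) : IsGroupChoosable G k := by
  classical
  intro A _ _ hA L hL f hf
  obtain ⟨D, -, hD⟩ := Finset.exists_subset_card_eq (s := Finset.univ) (by simpa using hA)
  let L' : W → Finset A := Function.extend φ L fun _ => D
  let f' : W → W → A := Function.extend φ (fun a => Function.extend φ (f a) 0) 0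
  have hL' : ∀ w, (L' w).card = k := by
    intro w
    by_cases hw : ∃ a, φ a = w
    · obtain ⟨a, rfl⟩ := hw
      simp [L', φ.injective.extend_apply, hL]
    · simp [L', Function.extend_apply' _ _ _ hw, hD]
  have hf'_apply : ∀ a b, f' (φ a) (φ b) = f a b := by
    simp [f', φ.injective.extend_apply]
  have hf'_zero : ∀ w x, (¬ ∃ a, φ a = w) ∨ (¬ ∃ b, φ b = x) → f' w x = 0 := by
    rintro w x (hw | hx)
    · simp [f', Function.extend_apply' _ _ _ hw]
    · by_cases hw : ∃ a, φ a = w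
      · obtain ⟨a, rfl⟩ := hw
        simp [f', φ.injective.extend_apply, Function.extend_apply' _ _ _ hx]
      · simp [f', Function.extend_apply' _ _ _ hw]
  have hf' : ∀ w x, f' x w = -f' w x := by
    intro w x
    by_cases hwx : (∃ a, φ a = w) ∧ (∃ b, φ b = x)
    · obtain ⟨⟨a, rfl⟩, ⟨b, rfl⟩⟩ := hwx
      rw [hf'_apply, hf'_apply, hf]
    · rw [not_and_or] at hwx
      rw [hf'_zero w x hwx, hf'_zero x w hwx.symm, neg_zero]
  obtain ⟨c, hcL, hc⟩ := h A hA L' hL' f' hf'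
  refine ⟨c ∘ φ, fun a => ?_, fun a b hab => ?_⟩
  · simpa [L', φ.injective.extend_apply] using hcL (φ a)
  · simpa [hf'_apply] using hc (φ a) (φ b) (φ.map_adj_iff.2 hab)

theorem exists_mem_forall_ne_of_ncard_lt_card {A : Type*} [Finite V] {L : Finset A} {S : Set V}
    (g : V → A) (h : S.ncard < L.card) : ∃ z ∈ L, ∀ w ∈ S, z ≠ g w := by
  by_contra! hL
  have hsub : (L : Set A) ⊆ g '' S := fun z hz => by
    obtain ⟨w, hw, rfl⟩ := hL z hz
    exact ⟨w, hw, rfl⟩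
  have := (Set.ncard_le_ncard hsub (S.toFinite.image g)).trans (Set.ncard_image_le S.toFinite)
  rw [Set.ncard_coe_finset] at this
  omega

theorem sub_ne_comm_of_antisymm {A : Type*} [AddCommGroup A] {f : V → V → A}
    (hf : ∀ u v, f v u = -f u v) (c : V → A) {u v : V} :
    c u - c v ≠ f u v ↔ c v - c u ≠ f v u := by
  rw [hf, ← neg_sub, neg_inj.ne]

theorem IsGroupChoosable.of_induce_ne [Finite V] {k : ℕ} (v₀ : V)
    (hdeg : (G.neighborSet v₀).ncard < k) (h : IsGroupChoosable (G.induce {v | v ≠ v₀}) k) :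
    IsGroupChoosable G k := by
  classical
  intro A _ _ hA L hL f hf
  obtain ⟨c, hcL, hc⟩ := h A hA (fun x => L x) (fun x => hL x) (fun x y => f x y)
    (fun x y => hf x y)
  let c' : V → A := fun x => if hx : x = v₀ then 0 else c ⟨x, hx⟩
  obtain ⟨z, hzL, hz⟩ := exists_mem_forall_ne_of_ncard_lt_card (fun w => c' w - f w v₀)
    ((hL v₀).symm ▸ hdeg)
  let col := Function.update c' v₀ z
  have hcol : ∀ x (hx : x ≠ v₀), col x = c ⟨x, hx⟩ := fun x hx => by
    simp [col, c', hx]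
  have hcol_v₀ : ∀ x, G.Adj x v₀ → col x - col v₀ ≠ f x v₀ := fun x hx hcon => by
    refine hz x hx.symm ?_
    simp only [col, Function.update_self, Function.update_of_ne (G.ne_of_adj hx)] at hcon
    rw [← hcon]
    abel
  refine ⟨col, fun x => ?_, fun x y hxy => ?_⟩
  · by_cases hx : x = v₀
    · subst hx
      simpa [col] using hzL
    · rw [hcol x hx]
      exact hcL _
  · by_cases hy : y = v₀
    · subst hy
      exact hcol_v₀ x hxy
    by_cases hx : x = v₀
    · subst hx
      exact (sub_ne_comm_of_antisymm hf col).2 (hcol_v₀ y hxy.symm)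
    rw [hcol x hx, hcol y hy]
    exact hc ⟨x, hx⟩ ⟨y, hy⟩ hxy

theorem isGroupChoosable_of_isEmpty [IsEmpty V] (G : SimpleGraph V) (k : ℕ) :
    IsGroupChoosable G k :=
  fun _ _ _ _ _ _ _ _ => ⟨isEmptyElim, isEmptyElim, isEmptyElim⟩

theorem isGroupChoosable_of_natCard_eq :
    ∀ (n : ℕ) {V : Type*} [Finite V] (G : SimpleGraph V), Nat.card V = n →
      IsGroupChoosable G n
  | 0, V, _, G, hV => by
    have : IsEmpty V := Finite.card_eq_zero_iff.1 hV
    exact isGroupChoosable_of_isEmpty G 0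
  | n + 1, V, _, G, hV => by
    obtain ⟨v₀⟩ : Nonempty V := Finite.card_pos_iff.1 (hV ▸ n.succ_pos)
    have hcard : Nat.card {v | v ≠ v₀} = n := by
      have := Set.ncard_sdiff_singleton_add_one (Set.mem_univ v₀)
      rw [Set.ncard_univ, hV, Nat.add_right_cancel_iff, ← Set.compl_eq_univ_sdiff,
        Set.compl_singleton_eq] at this
      exact (Nat.card_coe_set_eq _).trans this
    have hdeg : (G.neighborSet v₀).ncard < n + 1 := by
      rw [Nat.lt_succ_iff, ← hcard, ← Nat.card_coe_set_eq]
      exact Set.ncard_le_ncard fun w hw => (G.ne_of_adj hw).symm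
    exact .of_induce_ne v₀ hdeg
      ((isGroupChoosable_of_natCard_eq n (G.induce {v | v ≠ v₀}) hcard).mono n.le_succ)

-- `groupChoiceNumber` is an `sInf` (junk `0` on the empty set); it is attained since `V` is finite.
theorem groupChoiceNumber_le_iff [Finite V] {k : ℕ} :
    groupChoiceNumber G ≤ k ↔ IsGroupChoosable G k := by
  refine ⟨fun hk => IsGroupChoosable.mono ?_ hk, fun hk => Nat.sInf_le hk⟩
  exact Nat.sInf_mem (s := {k | IsGroupChoosable G k})
    ⟨_, isGroupChoosable_of_natCard_eq _ G rfl⟩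

theorem ncard_neighborSet [Fintype V] [DecidableRel G.Adj] (v : V) :
    (G.neighborSet v).ncard = G.degree v := by
  rw [Set.ncard_eq_toFinset_card', Set.toFinset_card, card_neighborSet_eq_degree]

theorem subgraphMaxDegree_le_maxDegree [Fintype V] [DecidableRel G.Adj] (H : G.Subgraph) :
    subgraphMaxDegree H ≤ G.maxDegree :=
  ciSup_le' fun v => calc
    (H.neighborSet v).ncard ≤ (G.neighborSet v).ncard :=
        Set.ncard_le_ncard (H.neighborSet_subset v)
    _ = G.degree v := ncard_neighborSet v
    _ ≤ G.maxDegree := G.degree_le_maxDegree v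

theorem ncard_incidenceSet [Fintype V] [DecidableRel G.Adj] (v : V) :
    (G.incidenceSet v).ncard = G.degree v := by
  classical
  rw [Set.ncard_eq_toFinset_card', Set.toFinset_card, card_incidenceSet_eq_degree]

theorem ncard_neighborSet_lineGraph_add_two_le [Fintype V] [DecidableRel G.Adj] {u v : V}
    (huv : G.Adj u v) :
    (G.lineGraph.neighborSet ⟨s(u, v), huv⟩).ncard + 2 ≤ G.degree u + G.degree v := by
  set e : G.edgeSet := ⟨s(u, v), huv⟩
  have hsub : Subtype.val '' G.lineGraph.neighborSet e ⊆
      (G.incidenceSet u \ {s(u, v)}) ∪ (G.incidenceSet v \ {s(u, v)}) := by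
    rintro _ ⟨e', he', rfl⟩
    obtain ⟨hne, x, hxe, hxe'⟩ := lineGraph_adj_iff_exists.1 he'
    have hne' : (e' : Sym2 V) ≠ s(u, v) := fun h => hne (Subtype.ext h.symm)
    rcases Sym2.mem_iff.1 hxe with rfl | rfl
    · exact Or.inl ⟨⟨e'.2, hxe'⟩, hne'⟩
    · exact Or.inr ⟨⟨e'.2, hxe'⟩, hne'⟩
  have hu : s(u, v) ∈ G.incidenceSet u := ⟨huv, Sym2.mem_mk_left u v⟩
  have hv : s(u, v) ∈ G.incidenceSet v := ⟨huv, Sym2.mem_mk_right u v⟩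
  calc (G.lineGraph.neighborSet e).ncard + 2
      = (Subtype.val '' G.lineGraph.neighborSet e).ncard + 2 := by
        rw [Set.ncard_image_of_injective _ Subtype.val_injective]
    _ ≤ (G.incidenceSet u \ {s(u, v)}).ncard + 1 +
          ((G.incidenceSet v \ {s(u, v)}).ncard + 1) := by
        have := (Set.ncard_le_ncard hsub).trans (Set.ncard_union_le _ _)
        omega
    _ = G.degree u + G.degree v := by
        rw [Set.ncard_sdiff_singleton_add_one hu, Set.ncard_sdiff_singleton_add_one hv,
          ncard_incidenceSet, ncard_incidenceSet]

def lineGraphInduceEmbedding {G' : SimpleGraph V} (s : Set G.edgeSet)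
    (hs : ∀ e ∈ s, (e : Sym2 V) ∈ G'.edgeSet) : G.lineGraph.induce s ↪g G'.lineGraph where
  toFun e := ⟨e.1, hs e.1 e.2⟩
  inj' e₁ e₂ h := by
    simp only [Subtype.mk.injEq] at h
    exact Subtype.ext (Subtype.ext h)
  map_rel_iff' := by
    intro e₁ e₂
    change G'.lineGraph.Adj ⟨e₁.1.1, _⟩ ⟨e₂.1.1, _⟩ ↔ G.lineGraph.Adj e₁.1 e₂.1
    simp only [lineGraph_adj_iff_exists, ne_eq, Subtype.ext_iff]

end SimpleGraph

/-- If `G` is group `(Δ(G)+i)`-edge-critical, then for every edge `uv ∈ E(G)` one has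
`d_G(u) + d_G(v) ≥ Δ(G) + i + 2`. -/
theorem degree_sum_of_isGroupEdgeCritical {V : Type*} [Fintype V]
    (G : SimpleGraph V) [DecidableRel G.Adj] (i : ℕ) (hG : IsGroupEdgeCritical G i)
    (u v : V) (huv : G.Adj u v) :
    G.maxDegree + i + 2 ≤ G.degree u + G.degree v := by
  by_contra! hlt
  let H : G.Subgraph := (⊤ : G.Subgraph).deleteEdges {s(u, v)}
  have hH : H ≠ ⊤ := fun h => by
    have : H.Adj u v := h ▸ huv
    simp [H] at this
  have hH_choosable : IsGroupEdgeChoosable H.coe (G.maxDegree + i) :=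
    groupChoiceNumber_le_iff.1 <| (hG.2 H hH).trans <| by
      gcongr
      exact subgraphMaxDegree_le_maxDegree H
  have hemb : G.lineGraph.induce {e | e ≠ ⟨s(u, v), huv⟩} ↪g H.coe.lineGraph :=
    (lineGraphInduceEmbedding _ fun e he => by
      change _ ∈ ((⊤ : G.Subgraph).deleteEdges _).spanningCoe.edgeSet
      rw [← Subgraph.deleteEdges_spanningCoe_eq, Subgraph.spanningCoe_top, edgeSet_deleteEdges]
      exact ⟨e.2, fun h => he (Subtype.ext h)⟩).trans
      (H.spanningCoeEquivCoeOfSpanning fun _ => trivial).lineGraph.toEmbedding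
  have hG_choosable : IsGroupEdgeChoosable G (G.maxDegree + i) :=
    .of_induce_ne _ (by have := ncard_neighborSet_lineGraph_add_two_le huv; omega)
      (hH_choosable.of_embedding hemb)
  exact hG.1.not_ge (groupChoiceNumber_le_iff.2 hG_choosable)
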